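/- arXiv:1904.04870 — 3 statements merged into one kernel-verified Lean document; each statement's English description precedes it below -/
import Mathlib

section
/- Let G be a simple graph on n vertices with Seidel matrix eigenvalues λ_1,...,λ_n. If |det(S(G))| ≥ n-1 and Σ λ_i² = n(n-1), then for every 0 < p < 2, Σ |λ_i|^p ≥ (n-1)^p + (n-1). -/
/-!
Put `x i = l i ^ 2`, `u = n - 1` and `q = p / 2 ∈ (0, 1)`, so that `∑ x = (u + 1) u`,
`∏ x ≥ u ^ 2` and the claim is `(u ^ 2) ^ q + u ≤ ∑ x ^ q`. Since `log x ≤ x - 1`, the two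
constraints force every `x i ≤ u ^ 2`. With `L = log (u ^ 2)`, choose `a ∈ (0, q ^ 2]` such that
`exp (q t) ≥ a exp t + (q - a) t + (1 - a)` holds with equality at `t = L`; the difference is
convex and then concave, and vanishes to second order at `0`, so the inequality holds for
all `t ≤ L`. Taking `t = log (x i)` and summing, `∑ x` is known and `∑ log (x i) ≥ L`, which
gives exactly `(u ^ 2) ^ q + u`.
-/

open Real Set Finset

lemma exp_mul_le_mul_exp_add {q : ℝ} (hq0 : 0 ≤ q) (hq1 : q ≤ 1) (s : ℝ) :
    exp (q * s) ≤ q * exp s + (1 - q) := by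
  simpa using convexOn_exp.2 (mem_univ s) (mem_univ 0) hq0 (sub_nonneg.2 hq1) (by ring)

lemma hasDerivAt_exp_const_mul (q t : ℝ) :
    HasDerivAt (fun t => exp (q * t)) (q * exp (q * t)) t :=
  ((hasDerivAt_id t).const_mul q).exp.congr_deriv (by simp [mul_comm])

lemma exp_mul_sub_one_sub_mul_le {q L : ℝ} (hq0 : 0 ≤ q) (hq1 : q ≤ 1) (hL : 0 ≤ L) :
    exp (q * L) - 1 - q * L ≤ q ^ 2 * (exp L - 1 - L) := by
  let G : ℝ → ℝ := fun s => q ^ 2 * (exp s - 1 - s) - (exp (q * s) - 1 - q * s)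
  have hG : ∀ s, HasDerivAt G (q ^ 2 * (exp s - 1) - q * (exp (q * s) - 1)) s := fun s =>
    ((((hasDerivAt_exp s).sub_const 1).sub (hasDerivAt_id s)).const_mul (q ^ 2) |>.sub
      (((hasDerivAt_exp_const_mul q s).sub_const 1).sub
        ((hasDerivAt_id s).const_mul q))).congr_deriv (by ring)
  -- `G' ≥ 0` everywhere by convexity of `exp`, so `G L ≥ G 0 = 0`.
  have hmono : Monotone G := monotone_of_hasDerivAt_nonneg hG fun s => by
    have := mul_le_mul_of_nonneg_left (exp_mul_le_mul_exp_add hq0 hq1 s) hq0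
    simp only [Pi.zero_apply]
    nlinarith
  simpa [G] using hmono hL

lemma ConvexOn.apply_le_of_hasDerivAt_eq_zero {S : Set ℝ} {F : ℝ → ℝ} {x y : ℝ}
    (hF : ConvexOn ℝ S F) (hx : x ∈ S) (hy : y ∈ S) (hF' : HasDerivAt F 0 x) : F x ≤ F y := by
  rcases lt_trichotomy y x with hyx | rfl | hxy
  · have := hF.slope_le_of_hasDerivAt hy hx hyx hF'
    rw [slope_def_field, div_nonpos_iff] at this
    rcases this with h | h <;> linarith [h.1, h.2]
  · rfl
  · have := hF.le_slope_of_hasDerivAt hx hy hxy hF'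
    rw [slope_def_field, le_div_iff₀ (by linarith)] at this
    linarith

lemma nonneg_of_convexOn_Iic_of_concaveOn_Icc {F : ℝ → ℝ} {T L t : ℝ} (hT : 0 ≤ T)
    (hconv : ConvexOn ℝ (Iic T) F) (hconc : ConcaveOn ℝ (Icc T L) F) (hF0 : F 0 = 0)
    (hF'0 : HasDerivAt F 0 0) (hFL : 0 ≤ F L) (ht : t ≤ L) : 0 ≤ F t := by
  have hleft : ∀ s ≤ T, 0 ≤ F s := fun s hs =>
    hF0 ▸ hconv.apply_le_of_hasDerivAt_eq_zero hT hs hF'0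
  rcases le_or_gt t T with htT | hTt
  · exact hleft t htT
  · have hTL : T ≤ L := hTt.le.trans ht
    exact (le_min (hleft T le_rfl) hFL).trans <|
      hconc.min_le_of_mem_Icc (left_mem_Icc.2 hTL) (right_mem_Icc.2 hTL) ⟨hTt.le, ht⟩

lemma mul_exp_le_sq_mul_exp_mul_iff {q a t : ℝ} (hq : 0 < q) (hq1 : q < 1) (ha : 0 < a) :
    a * exp t ≤ q ^ 2 * exp (q * t) ↔ t ≤ log (q ^ 2 / a) / (1 - q) := by
  have hsplit : a * exp t = a * exp ((1 - q) * t) * exp (q * t) := by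
    rw [mul_assoc, ← exp_add]; ring_nf
  rw [hsplit, mul_le_mul_iff_left₀ (exp_pos _), ← le_div_iff₀' ha,
    ← le_log_iff_exp_le (by positivity), le_div_iff₀' (sub_pos.2 hq1)]

lemma affine_exp_le_exp_mul {q a L t : ℝ} (hq : 0 < q) (hq1 : q < 1) (ha : 0 < a)
    (haq : a ≤ q ^ 2) (hL : a * exp L + (q - a) * L + (1 - a) ≤ exp (q * L)) (ht : t ≤ L) :
    a * exp t + (q - a) * t + (1 - a) ≤ exp (q * t) := by
  -- `F'' = q ^ 2 * exp (q * t) - a * exp t` is nonnegative exactly left of `T`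
  set T := log (q ^ 2 / a) / (1 - q)
  let F : ℝ → ℝ := fun t => exp (q * t) - (a * exp t + (q - a) * t + (1 - a))
  let F' : ℝ → ℝ := fun t => q * exp (q * t) - (a * exp t + (q - a))
  have hF : ∀ t, HasDerivAt F (F' t) t := fun t =>
    ((hasDerivAt_exp_const_mul q t).sub ((((hasDerivAt_exp t).const_mul a).add
      ((hasDerivAt_id t).const_mul (q - a))).add_const (1 - a))).congr_deriv (by simp [F'])
  have hF' : ∀ t, HasDerivAt F' (q ^ 2 * exp (q * t) - a * exp t) t := fun t =>
    (((hasDerivAt_exp_const_mul q t).const_mul q).sub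
      (((hasDerivAt_exp t).const_mul a).add_const (q - a))).congr_deriv (by ring)
  have hcont : Continuous F := by fun_prop
  have hconv : ConvexOn ℝ (Iic T) F :=
    convexOn_of_hasDerivWithinAt2_nonneg (convex_Iic T) hcont.continuousOn
      (fun t _ => (hF t).hasDerivWithinAt) (fun t _ => (hF' t).hasDerivWithinAt)
      fun t ht => sub_nonneg.2 <| (mul_exp_le_sq_mul_exp_mul_iff hq hq1 ha).2
        (interior_Iic (a := T) ▸ ht).le
  have hconc : ConcaveOn ℝ (Icc T L) F :=
    concaveOn_of_hasDerivWithinAt2_nonpos (convex_Icc T L) hcont.continuousOn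
      (fun t _ => (hF t).hasDerivWithinAt) (fun t _ => (hF' t).hasDerivWithinAt)
      fun t ht => sub_nonpos.2 <| le_of_lt <| not_le.1 fun h =>
        ((interior_Icc (a := T) ▸ ht).1).not_ge ((mul_exp_le_sq_mul_exp_mul_iff hq hq1 ha).1 h)
  have hT : 0 ≤ T := div_nonneg (log_nonneg ((one_le_div ha).2 haq)) (sub_nonneg.2 hq1.le)
  have := nonneg_of_convexOn_Iic_of_concaveOn_Icc hT hconv hconc (by simp [F])
    ((hF 0).congr_deriv (by simp [F'])) (sub_nonneg.2 hL) ht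
  exact sub_nonneg.1 this

lemma exists_affine_exp_eq_exp_mul {q L : ℝ} (hq : 0 < q) (hq1 : q ≤ 1) (hL : 0 < L) :
    ∃ a, 0 < a ∧ a ≤ q ^ 2 ∧ a * exp L + (q - a) * L + (1 - a) = exp (q * L) := by
  have hD : 0 < exp L - 1 - L := by linarith [add_one_lt_exp hL.ne']
  have hN : 0 < exp (q * L) - 1 - q * L := by linarith [add_one_lt_exp (mul_pos hq hL).ne']
  refine ⟨(exp (q * L) - 1 - q * L) / (exp L - 1 - L), div_pos hN hD,
    (div_le_iff₀ hD).2 (exp_mul_sub_one_sub_mul_le hq.le hq1 hL.le), ?_⟩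
  field_simp
  ring

lemma le_of_sum_sub_one_le_of_le_prod {ι : Type*} [Fintype ι] {x : ι → ℝ} {M : ℝ}
    (hx : ∀ i, 0 < x i) (hM : 1 < M) (hsum : ∑ i, (x i - 1) ≤ M - 1)
    (hprod : M ≤ ∏ i, x i) (i : ι) : x i ≤ M := by
  have hlogM : log M ≤ ∑ j, log (x j) := by
    rw [← log_prod fun j _ => (hx j).ne']
    exact log_le_log (by linarith) hprod
  have hsingle : x i - 1 - log (x i) ≤ ∑ j, (x j - 1 - log (x j)) :=
    single_le_sum (f := fun j => x j - 1 - log (x j))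
      (fun j _ => by linarith [log_le_sub_one_of_pos (hx j)]) (mem_univ i)
  have hlower : x i - M ≤ log (x i / M) := by
    rw [sum_sub_distrib] at hsingle
    rw [log_div (hx i).ne' (by linarith)]
    linarith
  have hupper : log (x i / M) ≤ (x i - M) / M := by
    have := log_le_sub_one_of_pos (div_pos (hx i) (by linarith : (0 : ℝ) < M))
    rwa [div_sub_one (by linarith)] at this
  by_contra! hlt
  linarith [div_lt_self (sub_pos.2 hlt) hM]

theorem rpow_add_le_sum_rpow {ι : Type*} [Fintype ι] {x : ι → ℝ} {u q : ℝ} (hx : ∀ i, 0 < x i)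
    (hu : 1 < u) (hcard : (Fintype.card ι : ℝ) = u + 1) (hsum : ∑ i, x i = (u + 1) * u)
    (hprod : u ^ 2 ≤ ∏ i, x i) (hq : 0 < q) (hq1 : q < 1) :
    (u ^ 2) ^ q + u ≤ ∑ i, x i ^ q := by
  have hM : 1 < u ^ 2 := by nlinarith
  have hsum' : ∑ i, (x i - 1) = u ^ 2 - 1 := by
    rw [sum_sub_distrib, hsum, sum_const, card_univ, nsmul_eq_mul, hcard]
    ring
  have hxM := le_of_sum_sub_one_le_of_le_prod hx hM hsum'.le hprod
  have hlogsum : log (u ^ 2) ≤ ∑ i, log (x i) := by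
    rw [← log_prod fun i _ => (hx i).ne']
    exact log_le_log (by linarith) hprod
  have hL : 0 < log (u ^ 2) := log_pos hM
  obtain ⟨a, ha, haq, haL⟩ := exists_affine_exp_eq_exp_mul hq hq1.le hL
  have hqa : 0 ≤ q - a := by nlinarith
  have hpoint : ∀ i, a * x i + (q - a) * log (x i) + (1 - a) ≤ x i ^ q := fun i => by
    have := affine_exp_le_exp_mul hq hq1 ha haq haL.le (log_le_log (hx i) (hxM i))
    rwa [exp_log (hx i), mul_comm q, ← rpow_def_of_pos (hx i)] at this
  calc (u ^ 2) ^ q + u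
      = a * ∑ i, x i + (q - a) * log (u ^ 2) + Fintype.card ι * (1 - a) := by
        rw [rpow_def_of_pos (by linarith), mul_comm _ q, ← haL, exp_log (by linarith), hsum, hcard]
        ring
    _ ≤ a * ∑ i, x i + (q - a) * ∑ i, log (x i) + Fintype.card ι * (1 - a) := by gcongr
    _ = ∑ i, (a * x i + (q - a) * log (x i) + (1 - a)) := by
        rw [sum_add_distrib, sum_add_distrib, ← mul_sum, ← mul_sum, sum_const, card_univ,
          nsmul_eq_mul]
    _ ≤ ∑ i, x i ^ q := sum_le_sum fun i _ => hpoint i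

lemma abs_rpow_eq_sq_rpow_half (y p : ℝ) : |y| ^ p = (y ^ 2) ^ (p / 2) := by
  rw [← sq_abs, ← rpow_natCast_mul (abs_nonneg y), Nat.cast_ofNat, mul_div_cancel₀ p two_ne_zero]

lemma abs_eq_one_of_sq_add_sq_eq_two {y z : ℝ} (hyz : 1 ≤ |y| * |z|) (hsq : y ^ 2 + z ^ 2 = 2) :
    |y| = 1 ∧ |z| = 1 := by
  rw [← sq_abs y, ← sq_abs z] at hsq
  have hy := abs_nonneg y
  have hz := abs_nonneg z
  -- `(|y| - |z|)² = 2 - 2 |y| |z| ≤ 0`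
  have heq : |y| = |z| := by nlinarith [sq_nonneg (|y| - |z|)]
  constructor <;> nlinarith

open Real in
/-- If `λ_1, ..., λ_n` are reals with `∑ λ_i² = n(n-1)` and `|∏ λ_i| ≥ n-1`,
then for every `0 < p < 2`, `∑ |λ_i|^p ≥ (n-1)^p + (n-1)`. -/
theorem ghorbani_ineq {n : ℕ} (l : Fin n → ℝ)
    (hdet : (n : ℝ) - 1 ≤ |∏ i, l i|)
    (hsq : ∑ i, (l i) ^ 2 = n * (n - 1 : ℝ)) :
    ∀ p : ℝ, 0 < p → p < 2 →
      ((n : ℝ) - 1) ^ p + ((n : ℝ) - 1) ≤ ∑ i, |l i| ^ p := by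
  intro p hp hp2
  rcases lt_or_ge n 3 with hn | hn
  · interval_cases n
    · -- `(-1) ^ p` is the junk value `cos (p * π)`
      simpa using (le_abs_self _).trans (abs_rpow_le_abs_rpow (-1 : ℝ) p)
    · simpa [zero_rpow hp.ne'] using rpow_nonneg (abs_nonneg (l 0)) p
    · obtain ⟨h0, h1⟩ := abs_eq_one_of_sq_add_sq_eq_two (y := l 0) (z := l 1)
        (by simp at hdet; linarith)
        (by norm_num [Fin.sum_univ_two] at hsq; exact hsq)
      norm_num [Fin.sum_univ_two, h0, h1]
  · have hn' : (3 : ℝ) ≤ n := by exact_mod_cast hn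
    have hl : ∀ i, l i ≠ 0 := fun i hi => by
      simp [prod_eq_zero (mem_univ i) hi] at hdet
      linarith
    have key := rpow_add_le_sum_rpow (x := fun i => l i ^ 2) (u := n - 1) (q := p / 2)
      (fun i => pow_two_pos_of_ne_zero (hl i)) (by linarith) (by simp) (by rw [hsq]; ring)
      (by rw [Finset.prod_pow, ← sq_abs (∏ i, l i)]; exact pow_le_pow_left₀ (by linarith) hdet 2)
      (by linarith) (by linarith)
    have hbase : ((n : ℝ) - 1) ^ p = (((n : ℝ) - 1) ^ 2) ^ (p / 2) := by
      rw [← abs_rpow_eq_sq_rpow_half, abs_of_nonneg (by linarith)]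
    rw [hbase]
    simpa only [abs_rpow_eq_sq_rpow_half] using key
end

section
/- For any simple graph G on n vertices, det(S(G)) ≡ (-1)^{n-1}(n-1) (mod 4); in particular, if n is even then det(S(G)) is odd, so det(S(G)) ≠ 0. -/
/-!
Write `det S = ∑_σ sign σ ∏ᵢ S (σ i) i`. The Seidel matrices of two graphs on the same
vertex set agree entrywise modulo 2, so the difference of their `σ`-terms is even; by
symmetry the terms of `σ` and `σ⁻¹` coincide, so each pair `{σ, σ⁻¹}` with `σ ≠ σ⁻¹`
contributes `0` modulo 4. For an involution `σ` the product is `0` if `σ` has a fixed point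
and `1` otherwise, whatever the graph. Hence `det S(G) ≡ det S(⊥) = det (J - I) (mod 4)`,
and `det (J - I) = (-1)^(n-1) (n-1)` by the matrix determinant lemma.
-/

open Matrix Equiv Finset

theorem Int.four_dvd_sum_of_involutive {α : Type*} [Fintype α] {τ : α → α}
    (hτ : Function.Involutive τ) (f : α → ℤ) (hf : ∀ a, f (τ a) = f a)
    (heven : ∀ a, 2 ∣ f a) (hfix : ∀ a, τ a = a → f a = 0) : 4 ∣ ∑ a, f a := by
  refine (ZMod.intCast_zmod_eq_zero_iff_dvd _ 4).mp ?_
  rw [Int.cast_sum]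
  refine Finset.sum_ninvolution τ (fun a => ?_) (fun a ha hτa => ha ?_) (fun _ => mem_univ _) hτ
  · obtain ⟨k, hk⟩ := heven a
    rw [← Int.cast_add, ZMod.intCast_zmod_eq_zero_iff_dvd, hf, hk]
    exact ⟨k, by ring⟩
  · rw [hfix a hτa, Int.cast_zero]

theorem Matrix.IsSymm.prod_perm_inv {n R : Type*} [Fintype n] [CommMonoid R]
    {A : Matrix n n R} (hA : A.IsSymm) (σ : Perm n) :
    ∏ i, A (σ⁻¹ i) i = ∏ i, A (σ i) i := by
  rw [← Equiv.prod_comp σ]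
  simp only [Perm.coe_inv, symm_apply_apply, hA.apply]

namespace SimpleGraph

variable {V : Type*} [DecidableEq V]

def seidelMatrix (G : SimpleGraph V) [DecidableRel G.Adj] : Matrix V V ℤ :=
  Matrix.of fun i j => if i = j then 0 else if G.Adj i j then -1 else 1

variable (G H : SimpleGraph V) [DecidableRel G.Adj] [DecidableRel H.Adj]

theorem seidelMatrix_apply (i j : V) :
    G.seidelMatrix i j = if i = j then 0 else if G.Adj i j then -1 else 1 :=
  rfl

theorem seidelMatrix_isSymm : G.seidelMatrix.IsSymm := by
  refine Matrix.IsSymm.ext fun i j => ?_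
  simp only [seidelMatrix_apply, eq_comm, G.adj_comm]

theorem seidelMatrix_apply_mul_apply_swap {i j : V} (hij : i ≠ j) :
    G.seidelMatrix i j * G.seidelMatrix j i = 1 := by
  by_cases h : G.Adj i j <;> simp [seidelMatrix_apply, hij, hij.symm, h, G.adj_comm]

theorem seidelMatrix_apply_modEq_two (i j : V) :
    G.seidelMatrix i j ≡ H.seidelMatrix i j [ZMOD 2] := by
  by_cases hij : i = j
  · simp [seidelMatrix_apply, hij]
  · have h : (-1 : ℤ) ≡ 1 [ZMOD 2] := by decide
    by_cases hG : G.Adj i j <;> by_cases hH : H.Adj i j <;>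
      simp [seidelMatrix_apply, hij, hG, hH, h, h.symm]

variable [Fintype V]

theorem prod_seidelMatrix_of_involutive {σ : Perm V} (hσ : Function.Involutive σ) :
    ∏ i, G.seidelMatrix (σ i) i = if ∀ i, σ i ≠ i then 1 else 0 := by
  split_ifs with hfree
  · refine prod_ninvolution σ (fun i => ?_) (fun i _ => hfree i) (fun _ => mem_univ _) hσ
    rw [hσ i]
    exact G.seidelMatrix_apply_mul_apply_swap (hfree i)
  · push Not at hfree
    obtain ⟨i, hi⟩ := hfree
    exact prod_eq_zero (mem_univ i) (by simp [seidelMatrix_apply, hi])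

theorem det_seidelMatrix_modEq_four : G.seidelMatrix.det ≡ H.seidelMatrix.det [ZMOD 4] := by
  rw [Int.modEq_iff_dvd, det_apply', det_apply', ← sum_sub_distrib]
  refine Int.four_dvd_sum_of_involutive inv_involutive _
    (fun σ => ?_) (fun σ => ?_) (fun σ hσ => ?_)
  · simp only [Perm.sign_inv, (seidelMatrix_isSymm _).prod_perm_inv]
  · rw [← mul_sub]
    exact dvd_mul_of_dvd_right
      (Int.ModEq.prod fun i _ => G.seidelMatrix_apply_modEq_two H _ _).dvd _
  · have hσ' : Function.Involutive σ := fun i => by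
      nth_rw 1 [← hσ]
      simp only [Perm.coe_inv, symm_apply_apply]
    rw [G.prod_seidelMatrix_of_involutive hσ', H.prod_seidelMatrix_of_involutive hσ', sub_self]

theorem det_seidelMatrix_bot (hV : 1 ≤ Fintype.card V) :
    (⊥ : SimpleGraph V).seidelMatrix.det =
      (-1) ^ (Fintype.card V - 1) * ((Fintype.card V : ℤ) - 1) := by
  have h : (⊥ : SimpleGraph V).seidelMatrix =
      -(1 + replicateCol (Fin 1) (fun _ : V => (1 : ℤ)) *
        replicateRow (Fin 1) (fun _ : V => -1)) := by
    ext i j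
    by_cases hij : i = j <;> simp [seidelMatrix_apply, Matrix.mul_apply, hij]
  rw [h, det_neg, det_one_add_mul_comm, det_unique]
  obtain ⟨m, hm⟩ := Nat.exists_eq_add_of_le hV
  simp [dotProduct, hm]
  ring

end SimpleGraph

/-- For a simple graph `G` on `n ≥ 1` vertices,
`det S(G) ≡ (-1)^{n-1} (n-1) (mod 4)`; in particular if `n` is even then
`det S(G)` is odd, hence nonzero. -/
theorem seidel_det_mod_four {n : ℕ} (hn : 1 ≤ n) (G : SimpleGraph (Fin n))
    [DecidableRel G.Adj] (S : Matrix (Fin n) (Fin n) ℤ)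
    (hS : ∀ i j, S i j = if i = j then 0 else if G.Adj i j then -1 else 1) :
    S.det ≡ (-1) ^ (n - 1) * ((n : ℤ) - 1) [ZMOD 4] ∧
      (Even n → Odd S.det ∧ S.det ≠ 0) := by
  have hSG : S = G.seidelMatrix := Matrix.ext hS
  have hmod : S.det ≡ (-1) ^ (n - 1) * ((n : ℤ) - 1) [ZMOD 4] := by
    have hbot := SimpleGraph.det_seidelMatrix_bot (V := Fin n) (by simpa using hn)
    rw [Fintype.card_fin] at hbot
    rw [hSG, ← hbot]
    exact G.det_seidelMatrix_modEq_four ⊥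
  refine ⟨hmod, fun heven => ?_⟩
  have hrhs : Odd ((-1 : ℤ) ^ (n - 1) * ((n : ℤ) - 1)) :=
    (Odd.pow odd_neg_one).mul ((Int.even_coe_nat n).mpr heven |>.sub_odd odd_one)
  have hodd : Odd S.det :=
    Int.odd_iff.mpr ((hmod.of_dvd (by norm_num : (2 : ℤ) ∣ 4)).eq.trans (Int.odd_iff.mp hrhs))
  exact ⟨hodd, by rintro h; simp [h] at hodd⟩
end

section
/- Let λ_1,...,λ_n be real numbers with Σ λ_i² = n(n-1). If additionally |Π λ_i| ≥ n-1, then Σ |λ_i| ≥ 2(n-1). -/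
private lemma tangent_ineq (q α : ℝ) (hq : 2 ≤ q)
    (hα : α * (q^2 - 1 - 2*Real.log q) = q - 1 - Real.log q)
    {x : ℝ} (hx0 : 0 < x) (hxq : x ≤ q) :
    α * x^2 + (1 - 2*α) * Real.log x + (1 - α) ≤ x := by
  have hL1 : Real.log q < q - 1 := Real.log_lt_sub_one_of_pos (by linarith) (by linarith)
  have hL0 : 0 < Real.log q := Real.log_pos (by linarith)
  have hD : 0 < q^2 - 1 - 2*Real.log q := by nlinarith
  have hαpos : 0 < α := by
    rcases le_or_gt α 0 with h | h
    · exfalso; nlinarith [mul_nonpos_of_nonpos_of_nonneg h hD.le]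
    · exact h
  have hlog2 : (0.6931471803:ℝ) < Real.log 2 := Real.log_two_gt_d9
  have hL2 : Real.log 2 ≤ Real.log q := Real.log_le_log (by norm_num) (by linarith)
  have hkey : 0 ≤ q^2 - 4*q + 3 + 2*Real.log q := by nlinarith [sq_nonneg (q-2)]
  have h4α : 4*α ≤ 1 := by
    rcases le_or_gt (4*α) 1 with h | h
    · exact h
    · exfalso; nlinarith [mul_lt_mul_of_pos_right h hD]
  set g : ℝ → ℝ := fun y => y - α*y^2 - (1-2*α)*Real.log y - (1-α) with hg
  have hder : ∀ y : ℝ, 0 < y → HasDerivAt g (1 - α*(2*y) - (1-2*α)*y⁻¹) y := by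
    intro y hy
    have h1 : HasDerivAt (fun z : ℝ => z) 1 y := hasDerivAt_id y
    have h2 : HasDerivAt (fun z : ℝ => α * z^2) (α * (2*y)) y := by
      simpa [mul_comm] using (hasDerivAt_pow 2 y).const_mul α
    have h3 : HasDerivAt (fun z : ℝ => (1-2*α) * Real.log z) ((1-2*α) * y⁻¹) y :=
      (Real.hasDerivAt_log hy.ne').const_mul _
    exact ((h1.sub h2).sub h3).sub_const (1-α)
  have hg1 : g 1 = 0 := by simp [hg]
  have hgq : g q = 0 := by
    simp only [hg]
    linear_combination -hα
  have hcont : ∀ s : Set ℝ, (∀ y ∈ s, (0:ℝ) < y) → ContinuousOn g s := by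
    intro s hs y hy
    exact (hder y (hs y hy)).continuousAt.continuousWithinAt
  have hdiff : ∀ s : Set ℝ, (∀ y ∈ s, (0:ℝ) < y) → DifferentiableOn ℝ g s := by
    intro s hs y hy
    exact (hder y (hs y hy)).differentiableAt.differentiableWithinAt
  have hderiv_eq : ∀ y : ℝ, 0 < y → deriv g y = 1 - α*(2*y) - (1-2*α)*y⁻¹ := by
    intro y hy; exact (hder y hy).deriv
  have main : 0 ≤ g x := by
    rcases le_total x 1 with hx1 | hx1
    · -- antitone on [x,1]
      have hanti : AntitoneOn g (Set.Icc x 1) := by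
        apply antitoneOn_of_deriv_nonpos (convex_Icc x 1)
        · exact hcont _ (fun y hy => lt_of_lt_of_le hx0 hy.1)
        · refine hdiff _ ?_
          rw [interior_Icc]
          exact fun y hy => lt_trans hx0 hy.1
        · intro y hy
          rw [interior_Icc] at hy
          have hy0 : 0 < y := lt_trans hx0 hy.1
          rw [hderiv_eq y hy0]
          have h5 : (1 - α*(2*y))*y ≤ (1-2*α) := by
            nlinarith [mul_nonneg (by linarith [hy.2] : (0:ℝ) ≤ 1 - y)
              (by nlinarith [hy.2] : (0:ℝ) ≤ 1 - 2*α*(1+y))]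
          have h6 : 1 - α*(2*y) ≤ (1-2*α)/y := (le_div_iff₀ hy0).mpr h5
          rw [div_eq_mul_inv] at h6
          linarith
      have := hanti (Set.left_mem_Icc.mpr hx1) (Set.right_mem_Icc.mpr hx1) hx1
      linarith [hg1 ▸ this]
    · rcases le_total (2*α*(x+1)) 1 with hr | hr
      · -- monotone on [1,x]
        have hmono : MonotoneOn g (Set.Icc 1 x) := by
          apply monotoneOn_of_deriv_nonneg (convex_Icc 1 x)
          · exact hcont _ (fun y hy => lt_of_lt_of_le one_pos hy.1)
          · refine hdiff _ ?_
            rw [interior_Icc]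
            exact fun y hy => lt_trans one_pos hy.1
          · intro y hy
            rw [interior_Icc] at hy
            have hy0 : 0 < y := lt_trans one_pos hy.1
            rw [hderiv_eq y hy0]
            have h5 : (1-2*α) ≤ (1 - α*(2*y))*y := by
              nlinarith [mul_nonneg (by linarith [hy.1] : (0:ℝ) ≤ y - 1)
                (by nlinarith [hy.2, hr] : (0:ℝ) ≤ 1 - 2*α*(1+y))]
            have h6 : (1-2*α)/y ≤ 1 - α*(2*y) := (div_le_iff₀ hy0).mpr h5
            rw [div_eq_mul_inv] at h6
            linarith
        have := hmono (Set.left_mem_Icc.mpr hx1) (Set.right_mem_Icc.mpr hx1) hx1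
        linarith [hg1 ▸ this]
      · -- antitone on [x,q]
        have hanti : AntitoneOn g (Set.Icc x q) := by
          apply antitoneOn_of_deriv_nonpos (convex_Icc x q)
          · exact hcont _ (fun y hy => lt_of_lt_of_le hx0 hy.1)
          · refine hdiff _ ?_
            rw [interior_Icc]
            exact fun y hy => lt_trans hx0 hy.1
          · intro y hy
            rw [interior_Icc] at hy
            have hy0 : 0 < y := lt_trans hx0 hy.1
            rw [hderiv_eq y hy0]
            have hy1 : 1 < y := lt_of_le_of_lt hx1 hy.1
            have h5 : (1 - α*(2*y))*y ≤ (1-2*α) := by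
              nlinarith [mul_nonneg (by linarith [hy1] : (0:ℝ) ≤ y - 1)
                (by nlinarith [hy.1, hr] : (0:ℝ) ≤ 2*α*(1+y) - 1)]
            have h6 : 1 - α*(2*y) ≤ (1-2*α)/y := (le_div_iff₀ hy0).mpr h5
            rw [div_eq_mul_inv] at h6
            linarith
        have := hanti (Set.left_mem_Icc.mpr hxq) (Set.right_mem_Icc.mpr hxq) hxq
        linarith [hgq ▸ this]
  simp only [hg] at main
  linarith

private lemma sum_big {n : ℕ} (a : Fin n → ℝ) (hpos : ∀ i, 0 < a i)
    (hn : 2 ≤ n) (hprod : (n:ℝ) - 1 ≤ ∏ i, a i) (i₀ : Fin n) (hbig : (n:ℝ) - 1 ≤ a i₀) :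
    2 * ((n:ℝ) - 1) ≤ ∑ i, a i := by
  set q : ℝ := (n:ℝ) - 1 with hqdef
  have hn2 : (2:ℝ) ≤ (n:ℝ) := by exact_mod_cast hn
  have hq1 : 1 ≤ q := by rw [hqdef]; linarith
  have hq0 : 0 < q := by linarith
  have hsplit : ∑ i, a i = a i₀ + ∑ i ∈ Finset.univ.erase i₀, a i :=
    (Finset.add_sum_erase _ _ (Finset.mem_univ i₀)).symm
  have hcard : ((Finset.univ.erase i₀).card : ℝ) = q := by
    rw [Finset.card_erase_of_mem (Finset.mem_univ i₀), Finset.card_univ, Fintype.card_fin]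
    rw [hqdef]
    push_cast [Nat.cast_sub (by omega : 1 ≤ n)]
    ring
  have hsum1 : ∑ i ∈ Finset.univ.erase i₀, (1 + Real.log (a i)) ≤ ∑ i ∈ Finset.univ.erase i₀, a i := by
    refine Finset.sum_le_sum fun i _ => ?_
    have := Real.log_le_sub_one_of_pos (hpos i)
    linarith
  have hsum2 : ∑ i ∈ Finset.univ.erase i₀, (1 + Real.log (a i))
      = q + (∑ i, Real.log (a i) - Real.log (a i₀)) := by
    have e1 : ∑ i ∈ Finset.univ.erase i₀, Real.log (a i)
        = ∑ i, Real.log (a i) - Real.log (a i₀) := by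
      rw [← Finset.add_sum_erase _ (fun i => Real.log (a i)) (Finset.mem_univ i₀)]
      ring
    rw [Finset.sum_add_distrib, Finset.sum_const, nsmul_eq_mul, hcard, e1, mul_one]
  have hlogprod : Real.log q ≤ ∑ i, Real.log (a i) := by
    rw [← Real.log_prod (fun i _ => (hpos i).ne')]
    exact Real.log_le_log hq0 hprod
  have hmono : Real.log (a i₀) - Real.log q ≤ a i₀ - q := by
    have h1 := Real.log_le_sub_one_of_pos (div_pos (hpos i₀) hq0)
    rw [Real.log_div (hpos i₀).ne' hq0.ne'] at h1
    have h2 : a i₀ / q ≤ a i₀ - q + 1 := by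
      rw [div_le_iff₀ hq0]
      nlinarith [mul_nonneg (by linarith : (0:ℝ) ≤ q - 1) (by linarith : (0:ℝ) ≤ a i₀ - q)]
    linarith
  linarith [hsplit, hsum1, hsum2, hlogprod, hmono]


/-- If `λ_1, ..., λ_n` are reals with `∑ λ_i² = n(n-1)` and `|∏ λ_i| ≥ n-1`,
then `∑ |λ_i| ≥ 2(n-1)`. -/
theorem haemers_bound {n : ℕ} (l : Fin n → ℝ)
    (hsq : ∑ i, (l i) ^ 2 = n * (n - 1 : ℝ))
    (hdet : (n : ℝ) - 1 ≤ |∏ i, l i|) :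
    2 * ((n : ℝ) - 1) ≤ ∑ i, |l i| := by
  rcases Nat.lt_or_ge n 2 with h2 | h2
  · interval_cases n
    · simp
    · simp only [Nat.cast_one, Fin.sum_univ_one]
      norm_num
  rcases Nat.lt_or_ge n 3 with h3 | h3
  · -- n = 2
    have hn : n = 2 := by omega
    subst hn
    rw [Fin.prod_univ_two] at hdet
    rw [Fin.sum_univ_two] at hsq
    rw [Fin.sum_univ_two]
    rw [abs_mul] at hdet
    norm_num at hdet hsq ⊢
    nlinarith [sq_abs (l 0), sq_abs (l 1), abs_nonneg (l 0), abs_nonneg (l 1),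
      sq_nonneg (|l 0| + |l 1| - 2), sq_nonneg (|l 0| + |l 1|)]
  · -- n ≥ 3
    have hn2 : 2 ≤ n := by omega
    set q : ℝ := (n:ℝ) - 1 with hqdef
    have hn3 : (3:ℝ) ≤ (n:ℝ) := by exact_mod_cast h3
    have hq2 : 2 ≤ q := by rw [hqdef]; linarith
    have hq0 : 0 < q := by linarith
    have hp : q ≤ ∏ i, |l i| := by rw [Finset.abs_prod] at hdet; exact hdet
    have hpos : ∀ i, 0 < |l i| := by
      intro i
      rcases eq_or_lt_of_le (abs_nonneg (l i)) with h | h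
      · exfalso
        have : ∏ j, |l j| = 0 := Finset.prod_eq_zero (Finset.mem_univ i) h.symm
        rw [this] at hp
        linarith
      · exact h
    by_cases hex : ∃ i, q ≤ |l i|
    · obtain ⟨i₀, hi₀⟩ := hex
      exact sum_big (fun i => |l i|) hpos hn2 hp i₀ hi₀
    · push_neg at hex
      set L := Real.log q with hLdef
      have hL1 : L < q - 1 := Real.log_lt_sub_one_of_pos (by linarith) (by intro h; rw [h] at hq2; linarith)
      have hL0 : 0 < L := Real.log_pos (by linarith)
      have hD : 0 < q^2 - 1 - 2*L := by nlinarith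
      set α : ℝ := (q - 1 - L) / (q^2 - 1 - 2*L) with hαdef
      have hα : α * (q^2 - 1 - 2*L) = q - 1 - L := div_mul_cancel₀ _ hD.ne'
      have hβ : 0 ≤ 1 - 2*α := by
        have hlog2 : (0.6931471803:ℝ) < Real.log 2 := Real.log_two_gt_d9
        have hL2 : Real.log 2 ≤ L := Real.log_le_log (by norm_num) (by linarith)
        have hkey : 0 ≤ q^2 - 4*q + 3 + 2*L := by nlinarith [sq_nonneg (q-2)]
        have h4α : 4*α ≤ 1 := by
          rcases le_or_gt (4*α) 1 with h | h
          · exact h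
          · exfalso; nlinarith [mul_lt_mul_of_pos_right h hD]
        have hαpos : 0 < α := by
          rcases le_or_gt α 0 with h | h
          · exfalso; nlinarith [mul_nonpos_of_nonpos_of_nonneg h hD.le]
          · exact h
        linarith
      have htan : ∀ i ∈ Finset.univ, α * |l i|^2 + (1-2*α)*Real.log |l i| + (1-α) ≤ |l i| :=
        fun i _ => tangent_ineq q α hq2 hα (hpos i) (hex i).le
      have hsum := Finset.sum_le_sum htan
      have hexp : ∑ i, (α * |l i|^2 + (1-2*α)*Real.log |l i| + (1-α))
          = α * (∑ i, |l i|^2) + (1-2*α) * (∑ i, Real.log |l i|) + (n:ℝ)*(1-α) := by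
        rw [Finset.sum_add_distrib, Finset.sum_add_distrib, ← Finset.mul_sum, ← Finset.mul_sum,
          Finset.sum_const, Finset.card_univ, Fintype.card_fin, nsmul_eq_mul]
      have hsq' : ∑ i, |l i|^2 = (q+1)*q := by
        have : ∀ i, |l i|^2 = (l i)^2 := fun i => sq_abs _
        rw [Finset.sum_congr rfl (fun i _ => this i), hsq, hqdef]
        ring
      have hlogsum : L ≤ ∑ i, Real.log |l i| := by
        rw [hLdef, ← Real.log_prod (fun i _ => (hpos i).ne')]
        exact Real.log_le_log hq0 hp
      have hnq : (n:ℝ) = q + 1 := by rw [hqdef]; ring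
      have hid : α*((q+1)*q) + (1-2*α)*L + (q+1)*(1-α) = 2*q := by linear_combination hα
      rw [hexp, hsq', hnq] at hsum
      have := mul_le_mul_of_nonneg_left hlogsum hβ
      linarith
end
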